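/- Let (yᵢ)_{i=0}^{n} and (ŷᵢ)_{i=0}^{n} be sequences of reals with |yᵢ - ŷᵢ| ≤ Δ for all i, and suppose for each i ∈ {1,…,n} there exist reals ωᵢ₋₁, μᵢ with |ωᵢ₋₁ - ŷᵢ₋₁| ≤ Δ, |μᵢ - ŷᵢ| ≤ Δ, and μᵢ = ωᵢ₋₁ + dᵢ where dᵢ is the i-th interpolated plant effect. Then |yₙ - (y₀ + ∑_{i=1}^{n} dᵢ)| ≤ 2Δ(n+1). -/

import Mathlib

/-!
Each monitored step pins the estimated drift `ŷᵢ - ŷᵢ₋₁ - dᵢ` to within `2Δ`, since both ends of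
the step are measured to within `Δ`. These errors add up along the `n` steps, and passing from
`ŷ` back to `y` at the two endpoints costs another `2Δ`.
-/

open Finset

section Telescoping

variable {E : Type*} [SeminormedAddCommGroup E]

theorem norm_sub_sub_le_of_norm_sub_le {a b ω μ d : E} {Δ : ℝ}
    (hω : ‖ω - a‖ ≤ Δ) (hμ : ‖μ - b‖ ≤ Δ) (hd : μ = ω + d) :
    ‖b - a - d‖ ≤ 2 * Δ :=
  calc ‖b - a - d‖ = ‖(ω - a) - (μ - b)‖ := by rw [hd]; congr 1; abel
    _ ≤ ‖ω - a‖ + ‖μ - b‖ := norm_sub_le _ _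
    _ ≤ 2 * Δ := by linarith

theorem norm_sub_add_sum_Icc_le (a d : ℕ → E) (ε : ℝ) (n : ℕ)
    (h : ∀ i, 1 ≤ i → i ≤ n → ‖a i - a (i - 1) - d i‖ ≤ ε) :
    ‖a n - (a 0 + ∑ i ∈ Icc 1 n, d i)‖ ≤ n * ε := by
  induction n with
  | zero => simp
  | succ m ih =>
    have hprev := ih fun i hi him => h i hi (by omega)
    have hlast := h (m + 1) (by omega) le_rfl
    rw [Nat.add_sub_cancel] at hlast
    calc ‖a (m + 1) - (a 0 + ∑ i ∈ Icc 1 (m + 1), d i)‖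
        = ‖(a (m + 1) - a m - d (m + 1)) + (a m - (a 0 + ∑ i ∈ Icc 1 m, d i))‖ := by
          rw [sum_Icc_succ_top (by omega)]; congr 1; abel
      _ ≤ ‖a (m + 1) - a m - d (m + 1)‖ + ‖a m - (a 0 + ∑ i ∈ Icc 1 m, d i)‖ := norm_add_le _ _
      _ ≤ (m + 1 : ℕ) * ε := by push_cast; linarith

end Telescoping

theorem multi_step_variation_general (n : ℕ) (y yhat d : ℕ → ℝ) (Δ : ℝ)
    (hmeas : ∀ i ≤ n, |y i - yhat i| ≤ Δ)
    (hstep : ∀ i, 1 ≤ i → i ≤ n →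
      ∃ ω μ : ℝ, |ω - yhat (i - 1)| ≤ Δ ∧ |μ - yhat i| ≤ Δ ∧ μ = ω + d i) :
    |y n - (y 0 + ∑ i ∈ Finset.Icc 1 n, d i)| ≤ 2 * Δ * (n + 1) := by
  have hdrift : |yhat n - (yhat 0 + ∑ i ∈ Icc 1 n, d i)| ≤ n * (2 * Δ) :=
    norm_sub_add_sum_Icc_le yhat d (2 * Δ) n fun i hi hin => by
      obtain ⟨ω, μ, hω, hμ, hd⟩ := hstep i hi hin
      exact norm_sub_sub_le_of_norm_sub_le hω hμ hd
  have hlast := abs_sub_comm (y n) (yhat n) ▸ hmeas n le_rfl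
  have hfirst := hmeas 0 (Nat.zero_le n)
  calc |y n - (y 0 + ∑ i ∈ Icc 1 n, d i)|
      = |(yhat n - (yhat 0 + ∑ i ∈ Icc 1 n, d i)) - (yhat n - y n) - (y 0 - yhat 0)| := by
        congr 1; ring
    _ ≤ |yhat n - (yhat 0 + ∑ i ∈ Icc 1 n, d i)| + |yhat n - y n| + |y 0 - yhat 0| :=
        (abs_sub _ _).trans (add_le_add_left (abs_sub _ _) _)
    _ ≤ 2 * Δ * (n + 1) := by linarith

theorem multi_step_variation (n : ℕ) (y yhat d : ℕ → ℝ) (Δ : ℝ) (hΔ : 0 ≤ Δ)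
    (hmeas : ∀ i ≤ n, |y i - yhat i| ≤ Δ)
    (hstep : ∀ i, 1 ≤ i → i ≤ n →
      ∃ ω μ : ℝ, |ω - yhat (i - 1)| ≤ Δ ∧ |μ - yhat i| ≤ Δ ∧ μ = ω + d i) :
    |y n - (y 0 + ∑ i ∈ Finset.Icc 1 n, d i)| ≤ 2 * Δ * (n + 1) :=
  multi_step_variation_general n y yhat d Δ hmeas hstep
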